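/- arXiv:0709.2882 — 3 statements merged into one kernel-verified Lean document; each statement's English description precedes it below -/
import Mathlib

section
/- Let α ∈ [0,1) be irrational with convergent denominators q_k. There is an absolute constant c > 0 such that for all M and k with q_k ≤ M < q_{k+1}, the sum S_M(α) = Σ_{m=1}^M 1/‖mα‖ satisfies S_M(α) ≥ c · M · log q_k. -/
open Filter MeasureTheory Real

/-- Distance from `x` to the nearest integer. -/
noncomputable def nd (x : ℝ) : ℝ := |x - round x|

/-- The Gauss map `x ↦ frac (1/x)` (with `0 ↦ 0`). -/
noncomputable def gaussMap (x : ℝ) : ℝ := Int.fract x⁻¹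

/-- The `k`-th partial quotient of the continued fraction of `α` (for `k ≥ 1`). -/
noncomputable def cfA (α : ℝ) (k : ℕ) : ℕ := ⌊(gaussMap^[k-1] α)⁻¹⌋₊

/-- Denominators of the continued fraction convergents of `α`. -/
noncomputable def cfQ (α : ℝ) : ℕ → ℕ
  | 0 => 1
  | 1 => cfA α 1
  | (k+2) => cfA α (k+2) * cfQ α (k+1) + cfQ α k

/-- Numerators of the continued fraction convergents of `α`. -/
noncomputable def cfP (α : ℝ) : ℕ → ℕ
  | 0 => 0
  | 1 => 1
  | (k+2) => cfA α (k+2) * cfP α (k+1) + cfP α k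

/-- `S α M = ∑_{m=1}^M 1/‖mα‖`. -/
noncomputable def S (α : ℝ) (M : ℕ) : ℝ := ∑ m ∈ Finset.Icc 1 M, 1 / nd (m * α)

/-!
If `p` and `q` are coprime and `q |q α - p| ≤ 1`, then for `m` running through `q` consecutive
integers the points `m α mod 1` are the points `m p / q mod 1`, which run through all of
`(1 / q) ℤ / ℤ`, shifted by a common amount and then moved by at most `1 / q` each. Hence every
interval of length `3 / q` mod 1 contains one of them, and choosing one point in each interval
`[3 (j + 1) / q, 3 (j + 2) / q)` with `j < q / 3 - 1` bounds the sum of `1 / ‖m α‖` over the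
block below by a harmonic sum, i.e. by `≫ q log q`. The convergents `p_k / q_k` satisfy these
hypotheses, and `[1, M]` contains at least `M / (2 q_k)` disjoint blocks of length `q_k`. When
`q_k` is small the trivial bound `1 / ‖m α‖ ≥ 2` suffices.
-/

open Finset

lemma irrational_gaussMap {x : ℝ} (hx : Irrational x) : Irrational (gaussMap x) :=
  hx.inv.sub_intCast _

lemma gaussMap_pos {x : ℝ} (hx : Irrational x) : 0 < gaussMap x :=
  (Int.fract_nonneg _).lt_of_ne' (irrational_gaussMap hx).ne_zero

lemma inv_eq_floor_add_gaussMap {x : ℝ} (hx : 0 ≤ x) : x⁻¹ = ⌊x⁻¹⌋₊ + gaussMap x := by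
  rw [gaussMap, natCast_floor_eq_intCast_floor (inv_nonneg.2 hx), Int.floor_add_fract]

section ContinuedFraction

variable {α : ℝ}

lemma irrational_iterate_gaussMap (hα : Irrational α) (k : ℕ) : Irrational (gaussMap^[k] α) := by
  induction k with
  | zero => exact hα
  | succ k ih => rw [Function.iterate_succ_apply']; exact irrational_gaussMap ih

lemma iterate_gaussMap_mem_Ioo (hα : Irrational α) (h0 : 0 < α) (h1 : α < 1) (k : ℕ) :
    gaussMap^[k] α ∈ Set.Ioo 0 1 := by
  cases k with
  | zero => exact ⟨h0, h1⟩
  | succ k =>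
    rw [Function.iterate_succ_apply']
    exact ⟨gaussMap_pos (irrational_iterate_gaussMap hα k), Int.fract_lt_one _⟩

lemma inv_iterate_gaussMap (hα : Irrational α) (h0 : 0 < α) (h1 : α < 1) (k : ℕ) :
    (gaussMap^[k] α)⁻¹ = cfA α (k + 1) + gaussMap^[k + 1] α := by
  rw [cfA, Nat.add_sub_cancel, Function.iterate_succ_apply',
    ← inv_eq_floor_add_gaussMap (iterate_gaussMap_mem_Ioo hα h0 h1 k).1.le]

lemma one_le_cfA (hα : Irrational α) (h0 : 0 < α) (h1 : α < 1) (k : ℕ) : 1 ≤ cfA α (k + 1) := by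
  obtain ⟨hpos, hlt⟩ := iterate_gaussMap_mem_Ioo hα h0 h1 k
  exact Nat.one_le_floor_iff _ |>.2 (one_le_inv₀ hpos |>.2 hlt.le)

lemma cfQ_le_cfQ_succ (hα : Irrational α) (h0 : 0 < α) (h1 : α < 1) (k : ℕ) :
    cfQ α k ≤ cfQ α (k + 1) := by
  cases k with
  | zero => exact one_le_cfA hα h0 h1 0
  | succ k =>
    show cfQ α (k + 1) ≤ cfA α (k + 2) * cfQ α (k + 1) + cfQ α k
    nlinarith [one_le_cfA hα h0 h1 (k + 1)]

lemma cfP_succ_mul_cfQ_sub (k : ℕ) :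
    (cfP α (k + 1) * cfQ α k : ℤ) - cfP α k * cfQ α (k + 1) = (-1) ^ k := by
  induction k with
  | zero => simp [cfP, cfQ]
  | succ k ih =>
    simp only [cfP, cfQ, Nat.cast_add, Nat.cast_mul, pow_succ]
    linear_combination -ih

lemma coprime_cfP_cfQ (k : ℕ) : (cfP α k).Coprime (cfQ α k) := by
  rw [← Nat.isCoprime_iff_coprime]
  have hsq : ((-1 : ℤ) ^ k) ^ 2 = 1 := by rw [← pow_mul, mul_comm, pow_mul, neg_one_sq, one_pow]
  exact ⟨-(-1) ^ k * cfQ α (k + 1), (-1) ^ k * cfP α (k + 1),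
    by linear_combination (-1) ^ k * cfP_succ_mul_cfQ_sub (α := α) k + hsq⟩

noncomputable def cfTheta (α : ℝ) (k : ℕ) : ℝ := cfQ α k * α - cfP α k

lemma cfTheta_succ (hα : Irrational α) (h0 : 0 < α) (h1 : α < 1) (k : ℕ) :
    cfTheta α (k + 1) = -gaussMap^[k + 1] α * cfTheta α k := by
  induction k with
  | zero =>
    have ha := inv_iterate_gaussMap hα h0 h1 0
    have hinv : α * α⁻¹ = 1 := mul_inv_cancel₀ h0.ne'
    simp only [Function.iterate_zero, id_eq, zero_add] at ha
    simp only [cfTheta, cfQ, cfP, Nat.cast_one, Nat.cast_zero, sub_zero, one_mul]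
    linear_combination -α * ha + hinv
  | succ k ih =>
    have ha := inv_iterate_gaussMap hα h0 h1 (k + 1)
    have hinv : (gaussMap^[k + 1] α)⁻¹ * gaussMap^[k + 1] α = 1 :=
      inv_mul_cancel₀ (iterate_gaussMap_mem_Ioo hα h0 h1 (k + 1)).1.ne'
    simp only [cfTheta, cfQ, cfP, Nat.cast_add, Nat.cast_mul] at ih ⊢
    linear_combination -(cfQ α (k + 1) * α - cfP α (k + 1)) * ha + (gaussMap^[k + 1] α)⁻¹ * ih
      - (cfQ α k * α - cfP α k) * hinv

lemma cfQ_mul_abs_cfTheta_le_one (hα : Irrational α) (h0 : 0 < α) (h1 : α < 1) (k : ℕ) :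
    cfQ α k * |cfTheta α k| ≤ 1 := by
  have hdet : (cfQ α (k + 1) + gaussMap^[k + 1] α * cfQ α k) * cfTheta α k = (-1) ^ k := by
    have hpq : (cfP α (k + 1) * cfQ α k : ℝ) - cfP α k * cfQ α (k + 1) = (-1) ^ k := by
      exact_mod_cast cfP_succ_mul_cfQ_sub k
    have h := cfTheta_succ hα h0 h1 k
    simp only [cfTheta] at h ⊢
    linear_combination (cfQ α k : ℝ) * h + hpq
  have hq : (cfQ α k : ℝ) ≤ cfQ α (k + 1) := by exact_mod_cast cfQ_le_cfQ_succ hα h0 h1 k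
  have ht := (iterate_gaussMap_mem_Ioo hα h0 h1 (k + 1)).1
  have habs := congrArg abs hdet
  rw [abs_mul, abs_of_nonneg (by positivity), abs_pow, abs_neg, abs_one, one_pow] at habs
  nlinarith [abs_nonneg (cfTheta α k)]

end ContinuedFraction

lemma exists_mem_Ioc_mul_sub_mul_eq {p q : ℕ} (hq : 0 < q) (hpq : p.Coprime q) (m0 : ℕ) (r : ℤ) :
    ∃ m ∈ Ioc m0 (m0 + q), ∃ z : ℤ, (m * p : ℤ) - z * q = r := by
  have : NeZero q := ⟨hq.ne'⟩
  set x : ZMod q := r * (p : ZMod q)⁻¹ - (m0 + 1)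
  have hdvd : (q : ℤ) ∣ ((m0 + 1 + x.val : ℕ) * p : ℤ) - r := by
    rw [← ZMod.intCast_zmod_eq_zero_iff_dvd]
    push_cast
    rw [ZMod.natCast_zmod_val, add_sub_cancel, mul_assoc, mul_comm _ (p : ZMod q),
      ZMod.coe_mul_inv_eq_one p hpq, mul_one, sub_self]
  obtain ⟨z, hz⟩ := hdvd
  refine ⟨m0 + 1 + x.val, ?_, z, by linear_combination hz⟩
  have := ZMod.val_lt x
  simp only [mem_Ioc]
  omega

lemma exists_mem_Ioc_mul_sub_int_mem_Ico {α : ℝ} {p q : ℕ} (hq : 0 < q) (hpq : p.Coprime q)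
    (hθ : q * |q * α - p| ≤ 1) (m0 : ℕ) (y : ℝ) :
    ∃ m ∈ Ioc m0 (m0 + q), ∃ z : ℤ, m * α - z ∈ Set.Ico y (y + 3 / q) := by
  set θ := q * α - p
  set r := ⌈q * y - m0 * θ⌉ + 1
  obtain ⟨m, hm, z, hz⟩ := exists_mem_Ioc_mul_sub_mul_eq hq hpq m0 r
  have hr₁ := Int.le_ceil (q * y - m0 * θ)
  have hr₂ := Int.ceil_lt_add_one (q * y - m0 * θ)
  have hzR : (m * p - z * q : ℝ) = r := by exact_mod_cast hz
  have hqR : (0 : ℝ) < q := by exact_mod_cast hq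
  -- `m α ≡ (r + m θ) / q`, and `m θ` differs from `m0 θ` by at most `q |θ| ≤ 1`
  have hkey : q * (m * α - z) = r + m0 * θ + (m - m0) * θ := by
    rw [← hzR]; ring
  have herr : |((m : ℝ) - m0) * θ| ≤ 1 := by
    simp only [mem_Ioc] at hm
    have h₁ : (0 : ℝ) ≤ m - m0 := by rw [sub_nonneg]; exact_mod_cast hm.1.le
    have h₂ : (m : ℝ) - m0 ≤ q := by rw [sub_le_iff_le_add']; exact_mod_cast hm.2
    rw [abs_mul, abs_of_nonneg h₁]
    exact (mul_le_mul_of_nonneg_right h₂ (abs_nonneg θ)).trans hθ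
  obtain ⟨herr₁, herr₂⟩ := abs_le.1 herr
  refine ⟨m, hm, z, le_of_mul_le_mul_left ?_ hqR, lt_of_mul_lt_mul_left ?_ hqR.le⟩
  · push_cast [r] at hkey; linarith
  · rw [mul_add, mul_div_cancel₀ _ hqR.ne']
    push_cast [r] at hkey; linarith

lemma nd_pos_of_lt_of_lt {x : ℝ} {z : ℤ} (h₀ : z < x) (h₁ : x < z + 1) : 0 < nd x := by
  rw [nd, abs_pos, sub_ne_zero]
  intro h
  rw [h] at h₀ h₁
  have : z < round x := by exact_mod_cast h₀
  have : round x < z + 1 := by exact_mod_cast h₁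
  omega

lemma log_div_le_sum_one_div_nd {α g : ℝ} (W : Finset ℕ) (hg : 0 < g) (J : ℕ)
    (hJ : (J + 1) * g ≤ 1) (hW : ∀ y : ℝ, ∃ m ∈ W, ∃ z : ℤ, m * α - z ∈ Set.Ico y (y + g)) :
    log (J + 1) / (2 * g) ≤ ∑ m ∈ W, 1 / nd (m * α) := by
  choose f hfW z hz using fun j : ℕ => hW ((j + 1) * g)
  have hlt : ∀ j ∈ range J, (j + 2) * g ≤ 1 := fun j hj => by
    have : (j : ℝ) + 1 ≤ J := by exact_mod_cast mem_range.1 hj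
    nlinarith
  have hidx : ∀ j ∈ range J, ⌊Int.fract ((f j : ℝ) * α) / g⌋₊ = j + 1 := fun j hj => by
    obtain ⟨h₁, h₂⟩ := hz j
    have h₃ := hlt j hj
    have hfract : Int.fract ((f j : ℝ) * α) = f j * α - z j :=
      Int.fract_eq_iff.2 ⟨by nlinarith, by nlinarith, z j, by ring⟩
    rw [hfract, Nat.floor_eq_iff (div_nonneg (by nlinarith) hg.le), le_div_iff₀ hg,
      div_lt_iff₀ hg]
    push_cast
    constructor <;> linarith
  have hinj : Set.InjOn f (range J) := fun j hj j' hj' hff => by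
    have := hidx j hj
    rw [hff, hidx j' hj'] at this
    omega
  have hterm : ∀ j ∈ range J, 1 / (2 * g) * (1 / (j + 1)) ≤ 1 / nd (f j * α) := fun j hj => by
    obtain ⟨h₁, h₂⟩ := hz j
    have h₃ := hlt j hj
    have hpos : 0 < nd (f j * α) := nd_pos_of_lt_of_lt (z := z j) (by nlinarith) (by nlinarith)
    have hle : nd (f j * α) ≤ (f j : ℝ) * α - z j :=
      (round_le _ (z j)).trans_eq (abs_of_pos (by nlinarith))
    rw [one_div_mul_one_div]
    exact one_div_le_one_div_of_le hpos (by nlinarith)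
  calc log (J + 1) / (2 * g) ≤ (harmonic J : ℝ) / (2 * g) := by
        gcongr; exact_mod_cast log_add_one_le_harmonic J
    _ = ∑ j ∈ range J, 1 / (2 * g) * (1 / (j + 1)) := by
        rw [harmonic, Rat.cast_sum, sum_div]
        refine sum_congr rfl fun j _ => ?_
        push_cast; ring
    _ ≤ ∑ j ∈ range J, 1 / nd (f j * α) := sum_le_sum hterm
    _ = ∑ m ∈ (range J).image f, 1 / nd (m * α) :=
        (sum_image (f := fun m : ℕ => 1 / nd (m * α)) hinj).symm
    _ ≤ ∑ m ∈ W, 1 / nd (m * α) :=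
        sum_le_sum_of_subset_of_nonneg (image_subset_iff.2 fun j _ => hfW j)
          fun _ _ _ => one_div_nonneg.2 (abs_nonneg _)

lemma div_six_mul_log_le_sum_Ioc {α : ℝ} {p q J : ℕ} (hpq : p.Coprime q)
    (hθ : q * |q * α - p| ≤ 1) (hJ : 3 * (J + 1) ≤ q) (m0 : ℕ) :
    q / 6 * log (J + 1) ≤ ∑ m ∈ Ioc m0 (m0 + q), 1 / nd (m * α) := by
  have hq : 0 < q := by omega
  have hqR : (0 : ℝ) < q := by exact_mod_cast hq
  have hJR : (J + 1) * (3 / q : ℝ) ≤ 1 := by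
    rw [mul_div_assoc', div_le_one hqR]; exact_mod_cast (by omega : (J + 1) * 3 ≤ q)
  convert log_div_le_sum_one_div_nd _ (by positivity) J hJR
    (exists_mem_Ioc_mul_sub_int_mem_Ico hq hpq hθ m0) using 1
  field_simp; ring

lemma mul_le_sum_Ioc_of_le_sum_blocks {f : ℕ → ℝ} {Q : ℕ} {b : ℝ}
    (hb : ∀ r, b ≤ ∑ m ∈ Ioc (r * Q) (r * Q + Q), f m) (R : ℕ) :
    R * b ≤ ∑ m ∈ Ioc 0 (R * Q), f m := by
  induction R with
  | zero => simp
  | succ R ih =>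
    rw [Nat.succ_mul, ← sum_Ioc_consecutive _ (Nat.zero_le _) (Nat.le_add_right _ _)]
    push_cast
    linarith [hb R]

lemma sum_Ioc_le_S (α : ℝ) {N M : ℕ} (h : N ≤ M) :
    ∑ m ∈ Ioc 0 N, 1 / nd (m * α) ≤ S α M :=
  sum_le_sum_of_subset_of_nonneg (fun m hm => by simp only [mem_Ioc, mem_Icc] at hm ⊢; omega)
    fun _ _ _ => one_div_nonneg.2 (abs_nonneg _)

lemma two_mul_le_S {α : ℝ} (hα : Irrational α) (M : ℕ) : 2 * M ≤ S α M := by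
  calc (2 : ℝ) * M = ∑ m ∈ Icc 1 M, 2 := by simp [mul_comm]
    _ ≤ S α M := sum_le_sum fun m hm => by
      have hpos : 0 < nd (m * α) :=
        abs_pos.2 (sub_ne_zero.2 ((hα.natCast_mul (by rw [mem_Icc] at hm; omega)).ne_int _))
      have hhalf : nd (m * α) ≤ 1 / 2 := abs_sub_round _
      rw [le_div_iff₀ hpos]
      linarith

theorem sum_lower_bound :
    ∃ c : ℝ, 0 < c ∧ ∀ α : ℝ, Irrational α → α ∈ Set.Ico (0:ℝ) 1 →
      ∀ M k : ℕ, cfQ α k ≤ M → M < cfQ α (k+1) →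
        c * M * Real.log (cfQ α k) ≤ S α M := by
  refine ⟨1 / 24, by norm_num, fun α hα hα01 M k hkM _ => ?_⟩
  have h0 : 0 < α := hα01.1.lt_of_ne hα.ne_zero.symm
  set Q := cfQ α k
  rcases lt_or_ge Q 36 with hQ | hQ
  · have hlog : log Q ≤ 36 := (log_le_self Q.cast_nonneg).trans (by exact_mod_cast hQ.le)
    nlinarith [two_mul_le_S hα M, M.cast_nonneg (α := ℝ)]
  obtain ⟨J, hJ⟩ : ∃ J, Q / 3 = J + 1 := Nat.exists_eq_add_one.2 (by omega)
  have hblocks := mul_le_sum_Ioc_of_le_sum_blocks (fun r => div_six_mul_log_le_sum_Ioc (J := J)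
    (coprime_cfP_cfQ k) (cfQ_mul_abs_cfTheta_le_one hα h0 hα01.2 k) (by omega) (r * Q)) (M / Q)
  have hM : M ≤ 2 * (M / Q * Q) := by
    have h₁ := Nat.lt_div_mul_add (a := M) (by omega : 0 < Q)
    have h₂ : Q ≤ M / Q * Q := Nat.le_mul_of_pos_left Q ((Nat.one_le_div_iff (by omega)).2 hkM)
    omega
  have hlogQ : log Q ≤ 2 * log (J + 1) := by
    have : Q ≤ (J + 1) ^ 2 := by nlinarith [Nat.div_add_mod Q 3, Nat.mod_lt Q (by omega : 3 > 0)]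
    calc log Q ≤ log ((J + 1) ^ 2) := log_le_log (by positivity) (by exact_mod_cast this)
      _ = 2 * log (J + 1) := by rw [log_pow]; norm_num
  calc 1 / 24 * M * log Q ≤ 1 / 24 * (2 * (M / Q * Q : ℕ)) * (2 * log (J + 1)) := by
        gcongr
        exact_mod_cast hM
    _ = (M / Q : ℕ) * (Q / 6 * log (J + 1)) := by push_cast; ring
    _ ≤ S α M := hblocks.trans (sum_Ioc_le_S α (Nat.div_mul_le_self M Q))
end

section
/- Let φ: ℕ → (0,∞). If Σ_k 1/φ(k) < ∞, then for Lebesgue-almost every α ∈ (0,1), a_k(α) ≤ φ(k) for all sufficiently large k, where a_k(α) is the k-th continued fraction partial quotient. -/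
/-!
Lebesgue measure on `[0, 1]` is at most `2 log 2` times the Gauss measure `dx / ((1 + x) log 2)`,
which is invariant under the Gauss map `T`: the preimage of `[a, b]` is the union of the branches
`[(m + 1 + b)⁻¹, (m + 1 + a)⁻¹]`, whose Gauss measures telescope to that of `[a, b]`. By induction
on `n` this gives `vol {x : Tⁿ x ∈ [a, b]} ≤ 2 (log (1 + b) - log (1 + a))`. Since `a_k(α) > t`
forces `T^(k-1) α ≤ 1 / t`, the set `{a_k > φ k}` has measure at most `2 / φ k`, and
Borel–Cantelli concludes.
-/

open Filter MeasureTheory Real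

open Set Topology

lemma gaussMap_iterate_mem_Ico {x : ℝ} (hx : x ∈ Ioo 0 1) (n : ℕ) :
    gaussMap^[n] x ∈ Ico 0 1 := by
  cases n with
  | zero => exact Ioo_subset_Ico_self hx
  | succ n =>
    rw [Function.iterate_succ_apply']
    exact ⟨Int.fract_nonneg _, Int.fract_lt_one _⟩

lemma exists_nat_mem_Icc_inv_of_gaussMap_mem_Icc {y a b : ℝ} (hy : y ∈ Ioo 0 1) (ha : 0 ≤ a)
    (h : gaussMap y ∈ Icc a b) : ∃ m : ℕ, y ∈ Icc (m + 1 + b)⁻¹ (m + 1 + a)⁻¹ := by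
  have hfloor : 1 ≤ ⌊y⁻¹⌋ := Int.le_floor.2 (by exact_mod_cast ((one_lt_inv₀ hy.1).2 hy.2).le)
  obtain ⟨m, hm⟩ : ∃ m : ℕ, ⌊y⁻¹⌋ = m + 1 := ⟨(⌊y⁻¹⌋ - 1).toNat, by omega⟩
  have hy_inv : y⁻¹ = m + 1 + gaussMap y := by
    have := Int.floor_add_fract y⁻¹
    rw [hm] at this
    push_cast at this
    rw [gaussMap]
    linarith
  have hb : 0 ≤ b := ha.trans (h.1.trans h.2)
  refine ⟨m, ?_, ?_⟩
  · rw [inv_le_comm₀ (by positivity) hy.1]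
    linarith [h.2]
  · rw [le_inv_comm₀ hy.1 (by positivity)]
    linarith [h.1]

lemma Ioo_inter_preimage_gaussMap_iterate_succ_subset (n : ℕ) {a b : ℝ} (ha : 0 ≤ a) :
    Ioo 0 1 ∩ gaussMap^[n + 1] ⁻¹' Icc a b ⊆
      (Ioo 0 1 ∩ gaussMap^[n] ⁻¹' {0}) ∪
        ⋃ m : ℕ, Ioo 0 1 ∩ gaussMap^[n] ⁻¹' Icc (m + 1 + b)⁻¹ (m + 1 + a)⁻¹ := by
  rintro x ⟨hx, hTx⟩
  rw [mem_preimage, Function.iterate_succ_apply'] at hTx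
  rcases (gaussMap_iterate_mem_Ico hx n).1.eq_or_lt with hzero | hpos
  · exact Or.inl ⟨hx, hzero.symm⟩
  · obtain ⟨m, hm⟩ := exists_nat_mem_Icc_inv_of_gaussMap_mem_Icc
      ⟨hpos, (gaussMap_iterate_mem_Ico hx n).2⟩ ha hTx
    exact Or.inr (mem_iUnion.2 ⟨m, hx, hm⟩)

lemma log_one_add_inv_le_log_one_add_inv {p q : ℝ} (hp : 0 < p) (hpq : p ≤ q) :
    log (1 + q⁻¹) ≤ log (1 + p⁻¹) :=
  log_le_log (by have := hp.trans_le hpq; positivity) (by gcongr)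

lemma log_one_add_inv_sub_log_one_add_inv {p q : ℝ} (hp : 0 < p) (hq : 0 < q) :
    log (1 + p⁻¹) - log (1 + q⁻¹) = (log q - log p) - (log (q + 1) - log (p + 1)) := by
  rw [inv_eq_one_div, inv_eq_one_div, one_add_div hp.ne', one_add_div hq.ne',
    log_div (by positivity) hp.ne', log_div (by positivity) hq.ne']
  ring

lemma tendsto_log_natCast_add_sub_log_natCast_add (c d : ℝ) :
    Tendsto (fun m : ℕ => log (m + d) - log (m + c)) atTop (𝓝 0) := by
  have hc : Tendsto (fun m : ℕ => (m : ℝ) + c) atTop atTop :=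
    tendsto_atTop_add_const_right _ c tendsto_natCast_atTop_atTop
  refine ((tendsto_log_comp_add_sub_log (d - c)).comp hc).congr fun m => ?_
  simp only [Function.comp_apply, add_assoc, add_sub_cancel]

lemma hasSum_sub_succ_of_antitone {f : ℕ → ℝ} {l : ℝ} (hf : Antitone f)
    (hl : Tendsto f atTop (𝓝 l)) : HasSum (fun n => f n - f (n + 1)) (f 0 - l) := by
  rw [hasSum_iff_tendsto_nat_of_nonneg fun n => sub_nonneg.2 (hf n.le_succ)]
  simp only [Finset.sum_range_sub']
  exact tendsto_const_nhds.sub hl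

lemma hasSum_log_one_add_inv_sub_log_one_add_inv {a b : ℝ} (ha : 0 ≤ a) (hab : a ≤ b) :
    HasSum (fun m : ℕ => log (1 + (m + 1 + a)⁻¹) - log (1 + (m + 1 + b)⁻¹))
      (log (1 + b) - log (1 + a)) := by
  have hb : 0 ≤ b := ha.trans hab
  set F : ℕ → ℝ := fun m => log (m + (1 + b)) - log (m + (1 + a)) with hF
  have hterm (m : ℕ) :
      log (1 + (m + 1 + a)⁻¹) - log (1 + (m + 1 + b)⁻¹) = F m - F (m + 1) := by
    rw [log_one_add_inv_sub_log_one_add_inv (by positivity) (by positivity)]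
    simp only [hF]
    push_cast
    ring_nf
  have hF_anti : Antitone F := antitone_nat_of_succ_le fun m => by
    linarith [hterm m, log_one_add_inv_le_log_one_add_inv (p := m + 1 + a) (q := m + 1 + b)
      (by positivity) (by linarith)]
  convert hasSum_sub_succ_of_antitone hF_anti (tendsto_log_natCast_add_sub_log_natCast_add _ _)
    using 1
  · exact funext hterm
  · simp [hF]

lemma sub_le_two_mul_log_sub_log {a b : ℝ} (ha : -1 < a) (hab : a ≤ b) (hb : b ≤ 1) :
    b - a ≤ 2 * (log (1 + b) - log (1 + a)) := by
  have hb0 : 0 < 1 + b := by linarith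
  have ha0 : 0 < 1 + a := by linarith
  have hlog := log_le_sub_one_of_pos (div_pos ha0 hb0)
  rw [log_div ha0.ne' hb0.ne', div_sub_one hb0.ne'] at hlog
  have : (1 + a - (1 + b)) / (1 + b) ≤ (a - b) / 2 := by
    rw [div_le_div_iff₀ hb0 two_pos]
    nlinarith
  linarith

theorem volume_Ioo_inter_preimage_gaussMap_iterate_Icc_le (n : ℕ) {a b : ℝ} (ha : 0 ≤ a)
    (hab : a ≤ b) (hb : b ≤ 1) :
    volume (Ioo 0 1 ∩ gaussMap^[n] ⁻¹' Icc a b) ≤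
      ENNReal.ofReal (2 * (log (1 + b) - log (1 + a))) := by
  induction n generalizing a b with
  | zero =>
    calc volume (Ioo 0 1 ∩ gaussMap^[0] ⁻¹' Icc a b)
        ≤ volume (Icc a b) := measure_mono inter_subset_right
      _ = ENNReal.ofReal (b - a) := Real.volume_Icc
      _ ≤ _ := ENNReal.ofReal_le_ofReal (sub_le_two_mul_log_sub_log (by linarith) hab hb)
  | succ n ih =>
    have hb0 : 0 ≤ b := ha.trans hab
    have hzero : volume (Ioo 0 1 ∩ gaussMap^[n] ⁻¹' {0}) = 0 := by
      simpa using ih le_rfl le_rfl zero_le_one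
    have hsum := (hasSum_log_one_add_inv_sub_log_one_add_inv ha hab).mul_left 2
    have hnonneg (m : ℕ) : 0 ≤ 2 * (log (1 + (m + 1 + a)⁻¹) - log (1 + (m + 1 + b)⁻¹)) := by
      linarith [log_one_add_inv_le_log_one_add_inv (p := m + 1 + a) (q := m + 1 + b)
        (by positivity) (by linarith)]
    calc volume (Ioo 0 1 ∩ gaussMap^[n + 1] ⁻¹' Icc a b)
        ≤ volume (Ioo 0 1 ∩ gaussMap^[n] ⁻¹' {0}) + volume
            (⋃ m : ℕ, Ioo 0 1 ∩ gaussMap^[n] ⁻¹' Icc (m + 1 + b)⁻¹ (m + 1 + a)⁻¹) :=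
          (measure_mono (Ioo_inter_preimage_gaussMap_iterate_succ_subset n ha)).trans
            (measure_union_le _ _)
      _ ≤ ∑' m : ℕ, volume (Ioo 0 1 ∩ gaussMap^[n] ⁻¹' Icc (m + 1 + b)⁻¹ (m + 1 + a)⁻¹) := by
          rw [hzero, zero_add]
          exact measure_iUnion_le _
      _ ≤ ∑' m : ℕ,
            ENNReal.ofReal (2 * (log (1 + (m + 1 + a)⁻¹) - log (1 + (m + 1 + b)⁻¹))) :=
          ENNReal.tsum_le_tsum fun m => ih (by positivity)
            (inv_anti₀ (by positivity) (by linarith))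
            (inv_le_one_of_one_le₀ (by linarith [m.cast_nonneg' (α := ℝ)]))
      _ = ENNReal.ofReal (2 * (log (1 + b) - log (1 + a))) := by
          rw [← ENNReal.ofReal_tsum_of_nonneg hnonneg hsum.summable, hsum.tsum_eq]

lemma gaussMap_iterate_mem_Icc_of_lt_cfA {α t : ℝ} (hα : α ∈ Ioo 0 1) (ht : 0 < t) {k : ℕ}
    (h : t < cfA α k) : gaussMap^[k - 1] α ∈ Icc 0 (min 1 t⁻¹) := by
  have hy := gaussMap_iterate_mem_Ico hα (k - 1)
  have hlt : t < (gaussMap^[k - 1] α)⁻¹ := h.trans_le (Nat.floor_le (inv_nonneg.2 hy.1))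
  have hpos : 0 < gaussMap^[k - 1] α := inv_pos.1 (ht.trans hlt)
  exact ⟨hy.1, le_min hy.2.le ((le_inv_comm₀ ht hpos).1 hlt.le)⟩

lemma volume_setOf_lt_cfA_inter_Ioo_le (k : ℕ) {t : ℝ} (ht : 0 < t) :
    volume ({α | t < cfA α k} ∩ Ioo 0 1) ≤ ENNReal.ofReal (2 / t) := by
  set c := min 1 t⁻¹
  have hc : 0 ≤ c := le_min zero_le_one (inv_nonneg.2 ht.le)
  calc volume ({α | t < cfA α k} ∩ Ioo 0 1)
      ≤ volume (Ioo 0 1 ∩ gaussMap^[k - 1] ⁻¹' Icc 0 c) := measure_mono fun α ⟨h, hα⟩ =>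
        ⟨hα, gaussMap_iterate_mem_Icc_of_lt_cfA hα ht h⟩
    _ ≤ ENNReal.ofReal (2 * (log (1 + c) - log (1 + 0))) :=
        volume_Ioo_inter_preimage_gaussMap_iterate_Icc_le _ le_rfl hc (min_le_left _ _)
    _ ≤ ENNReal.ofReal (2 / t) := by
        refine ENNReal.ofReal_le_ofReal ?_
        have hlog : log (1 + c) ≤ c := by linarith [log_le_sub_one_of_pos (by linarith : 0 < 1 + c)]
        have : c ≤ t⁻¹ := min_le_right _ _
        rw [add_zero, log_one, sub_zero, div_eq_mul_inv]
        linarith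

theorem khinchin_convergent (φ : ℕ → ℝ) (hφ : ∀ k, 0 < φ k)
    (hsum : Summable (fun k : ℕ => 1 / φ k)) :
    ∀ᵐ α ∂(MeasureTheory.volume.restrict (Set.Ioo (0:ℝ) 1)),
      ∀ᶠ k : ℕ in Filter.atTop, (cfA α k : ℝ) ≤ φ k := by
  have hBC : ∑' k, volume.restrict (Ioo 0 1) {α | φ k < cfA α k} ≠ ⊤ := by
    refine ne_top_of_le_ne_top (hsum.mul_left 2).tsum_ofReal_ne_top
      (ENNReal.tsum_le_tsum fun k => ?_)
    rw [Measure.restrict_apply' measurableSet_Ioo, mul_one_div]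
    exact volume_setOf_lt_cfA_inter_Ioo_le k (hφ k)
  filter_upwards [ae_eventually_notMem hBC] with α hα
  filter_upwards [hα] with k hk
  exact not_lt.1 hk
end

section
/- Let α ∈ [0,1) be irrational with convergent p_k/q_k in lowest terms. Then for any integer l ≥ 0 with (l+1)q_k ≤ M, Σ_{m=1+l q_k}^{(l+1)q_k} 1/(‖m p_k/q_k‖ + 1/q_k) ≥ (q_k/2) Σ_{n=1}^{q_k} 1/n, i.e., summing 1/(‖m p_k/q_k‖ + 1/q_k) over any block of q_k consecutive integers gives at least (q_k/2)·H_{q_k} where H_n is the n-th harmonic number. -/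
open Filter MeasureTheory Real

lemma cf_det (α : ℝ) : ∀ k, (cfP α (k+1) : ℤ) * cfQ α k - cfP α k * cfQ α (k+1) = (-1)^k := by
  intro k
  induction k with
  | zero => simp [cfP, cfQ]
  | succ n ih =>
      show (cfP α (n+2) : ℤ) * cfQ α (n+1) - cfP α (n+1) * cfQ α (n+2) = (-1)^(n+1)
      have hp : cfP α (n+2) = cfA α (n+2) * cfP α (n+1) + cfP α n := rfl
      have hq : cfQ α (n+2) = cfA α (n+2) * cfQ α (n+1) + cfQ α n := rfl
      rw [hp, hq]
      push_cast
      linear_combination (-1 : ℤ) * ih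

lemma cf_coprime (α : ℝ) (k : ℕ) (hk : 1 ≤ k) : Nat.Coprime (cfP α k) (cfQ α k) := by
  obtain ⟨j, rfl⟩ := Nat.exists_eq_add_of_le' hk
  rw [← Nat.isCoprime_iff_coprime]
  exact ⟨(-1)^j * cfQ α j, -((-1)^j * cfP α j), by
    have := cf_det α j
    have h2 : ((-1:ℤ)^j)^2 = 1 := by
      rcases Nat.even_or_odd j with h | h
      · rw [h.neg_one_pow]; ring
      · rw [h.neg_one_pow]; ring
    linear_combination (-1:ℤ)^j * this + h2⟩

lemma cfQ_pos (α : ℝ) (hα : Irrational α) (hmem : α ∈ Set.Ico (0:ℝ) 1) : ∀ k, 1 ≤ cfQ α k := by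
  have h0 : 0 < α := lt_of_le_of_ne hmem.1 (Ne.symm (by exact_mod_cast hα.ne_int 0))
  have h1 : 1 ≤ cfA α 1 := by
    rw [cfA]
    simp only [Nat.sub_self, Function.iterate_zero, id]
    have : (1:ℝ) ≤ α⁻¹ := (one_le_inv₀ h0).mpr hmem.2.le
    exact (Nat.one_le_floor_iff _).mpr this
  intro k
  induction k using Nat.strong_induction_on with
  | _ k ih =>
    match k with
    | 0 => simp [cfQ]
    | 1 => simpa [cfQ] using h1
    | (n+2) =>
        have := ih n (by omega)
        show 1 ≤ cfA α (n+2) * cfQ α (n+1) + cfQ α n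
        omega

theorem block_sum_lower (α : ℝ) (hα : Irrational α) (hmem : α ∈ Set.Ico (0:ℝ) 1)
    (k : ℕ) (hk : 1 ≤ k) (l M : ℕ) (hlM : (l + 1) * cfQ α k ≤ M) :
    ((cfQ α k : ℝ) / 2) * ∑ n ∈ Finset.Icc 1 (cfQ α k), (1 : ℝ) / n ≤
      ∑ m ∈ Finset.Icc (l * cfQ α k + 1) ((l + 1) * cfQ α k),
        1 / (nd ((m : ℝ) * cfP α k / cfQ α k) + 1 / cfQ α k) := by
  set q := cfQ α k with hqdef
  set p := cfP α k with hpdef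
  have hq : 1 ≤ q := cfQ_pos α hα hmem k
  have hcop : Nat.Coprime p q := cf_coprime α k hk
  have hq0 : (0:ℝ) < q := by exact_mod_cast hq
  -- termwise lower bound
  have hterm : ∀ m : ℕ, (q:ℝ)/((m*p % q : ℕ) + 1) ≤ 1 / (nd ((m:ℝ) * p / q) + 1/q) := by
    intro m
    have hnd0 : 0 ≤ nd ((m:ℝ) * p / q) := abs_nonneg _
    have hpos : 0 < nd ((m:ℝ) * p / q) + 1/q := by positivity
    have hnd : nd ((m:ℝ) * p / q) ≤ ((m*p % q : ℕ):ℝ)/q := by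
      have hcast : (m:ℝ) * p / q = ((m*p : ℕ):ℝ)/q := by push_cast; ring
      rw [nd, abs_sub_round_eq_min, hcast, Int.fract_div_natCast_eq_div_natCast_mod]
      exact min_le_left _ _
    have hle : nd ((m:ℝ) * p / q) + 1/q ≤ (((m*p % q : ℕ):ℝ) + 1)/q := by
      rw [add_div]
      exact add_le_add hnd (by rw [one_div])
    calc (q:ℝ)/((m*p % q : ℕ) + 1) = 1 / ((((m*p % q : ℕ):ℝ) + 1)/q) := by
          rw [one_div_div]
      _ ≤ 1 / (nd ((m:ℝ) * p / q) + 1/q) := one_div_le_one_div_of_le hpos hle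
  -- the residues m*p % q form a bijection with range q
  have hinj : Set.InjOn (fun m => m * p % q) (Finset.Icc (l*q+1) ((l+1)*q)) := by
    intro m1 h1 m2 h2 h
    simp only [Finset.coe_Icc, Set.mem_Icc] at h1 h2
    have hmod : m1 ≡ m2 [MOD q] :=
      (Nat.ModEq.cancel_right_of_coprime (by rwa [Nat.gcd_comm]) h)
    have hexp : (l+1)*q = l*q + q := by ring
    rcases le_total m1 m2 with hle | hle
    · have hd : q ∣ m2 - m1 := (Nat.modEq_iff_dvd' hle).mp hmod
      rcases Nat.eq_zero_or_pos (m2 - m1) with h0 | h0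
      · omega
      · have := Nat.le_of_dvd h0 hd
        omega
    · have hd : q ∣ m1 - m2 := (Nat.modEq_iff_dvd' hle).mp hmod.symm
      rcases Nat.eq_zero_or_pos (m1 - m2) with h0 | h0
      · omega
      · have := Nat.le_of_dvd h0 hd
        omega
  have himg : (Finset.Icc (l*q+1) ((l+1)*q)).image (fun m => m * p % q) = Finset.range q := by
    apply Finset.eq_of_subset_of_card_le
    · intro r hr
      simp only [Finset.mem_image] at hr
      obtain ⟨m, _, rfl⟩ := hr
      exact Finset.mem_range.mpr (Nat.mod_lt _ (by omega))
    · rw [Finset.card_image_of_injOn hinj, Finset.card_range, Nat.card_Icc]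
      have : (l+1)*q = l*q + q := by ring
      omega
  have hsum : ∑ m ∈ Finset.Icc (l*q+1) ((l+1)*q), (q:ℝ)/((m*p % q : ℕ) + 1)
      = ∑ r ∈ Finset.range q, (q:ℝ)/((r:ℝ) + 1) := by
    rw [← himg, Finset.sum_image hinj]
  have hH : ∑ r ∈ Finset.range q, (1:ℝ)/((r:ℝ)+1) = ∑ n ∈ Finset.Icc 1 q, (1:ℝ)/n := by
    rw [← Finset.Ico_add_one_right_eq_Icc, Finset.sum_Ico_eq_sum_range]
    have h1 : q + 1 - 1 = q := by omega
    rw [h1]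
    apply Finset.sum_congr rfl
    intro r _
    push_cast
    ring_nf
  have hHnn : 0 ≤ ∑ n ∈ Finset.Icc 1 q, (1:ℝ)/n :=
    Finset.sum_nonneg (fun n _ => by positivity)
  calc ((q:ℝ)/2) * ∑ n ∈ Finset.Icc 1 q, (1:ℝ)/n
      ≤ (q:ℝ) * ∑ n ∈ Finset.Icc 1 q, (1:ℝ)/n := by
        apply mul_le_mul_of_nonneg_right _ hHnn
        linarith
    _ = ∑ r ∈ Finset.range q, (q:ℝ)/((r:ℝ)+1) := by
        rw [← hH, Finset.mul_sum]
        apply Finset.sum_congr rfl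
        intro r _
        rw [mul_one_div]
    _ = ∑ m ∈ Finset.Icc (l*q+1) ((l+1)*q), (q:ℝ)/((m*p % q : ℕ) + 1) := hsum.symm
    _ ≤ ∑ m ∈ Finset.Icc (l*q+1) ((l+1)*q), 1 / (nd ((m:ℝ) * p / q) + 1/q) :=
        Finset.sum_le_sum (fun m _ => hterm m)
end
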